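/- arXiv:1501.00599 — 5 statements merged into one kernel-verified Lean document; each statement's English description precedes it below -/
import Mathlib

section
/- Let X and Y be nonnegative random variables with distribution functions F and G respectively, each with finite positive mean μ_F = E[X] and μ_G = E[Y]. Let X₁, X₂ be independent copies of X and Y₁, Y₂ independent copies of Y, and set μ_F^{(2)} = E[max{X₁,X₂}] and μ_G^{(2)} = E[max{Y₁,Y₂}]. If F ≤_* G (F is more IFRA than G), then μ_F^{(2)}/μ_F ≤ μ_G^{(2)}/μ_G. -/
/-!
Write `F`, `G` for the distribution functions, `m_F = ∫₀^∞ (1 - F)`, `m_G = ∫₀^∞ (1 - G)` for the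
means, and recall that `E[max{X₁, X₂}] = ∫₀^∞ (1 - F²)`. With `c = m_G / m_F` the rescaled
`H(t) = G(c t)` has the same mean as `F`, and the star order says that once `H` drops below `F`
on `(0, ∞)` it stays below. Hence for a suitable level `ℓ` the integrand `(F - H)(F + H - ℓ)` is
nonnegative, and integrating it gives `∫(1 - F²) - ∫(1 - H²) ≤ ℓ (∫(1 - F) - ∫(1 - H)) = 0`,
i.e. `E[max{X₁, X₂}] ≤ E[max{Y₁, Y₂}] / c`.
-/

open MeasureTheory ProbabilityTheory Set

/-- The right-continuous inverse of a (distribution) function `G`. -/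
noncomputable def rcInv (G : ℝ → ℝ) (u : ℝ) : ℝ := sInf {x : ℝ | u < G x}

/-- `F` is smaller than `G` in the star order (`F` is more IFRA than `G`):
`x ↦ G⁻¹(F(x))/x` is nondecreasing on `(0, ∞)`. -/
def StarOrder (F G : ℝ → ℝ) : Prop :=
  MonotoneOn (fun x => rcInv G (F x) / x) (Set.Ioi (0 : ℝ))

lemma StieltjesFunction.lt_rcInv_of_lt (G : StieltjesFunction ℝ) {u x : ℝ}
    (hu : ∃ y, u < G y) (h : G x < u) : x < rcInv G u := by
  by_contra! hle
  have : u ≤ G x := by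
    rw [← G.iInf_Ioi_eq x]
    refine le_ciInf fun w => ?_
    obtain ⟨s, hs, hsw⟩ := exists_lt_of_csInf_lt hu (hle.trans_lt w.2)
    exact (le_of_lt hs).trans (G.mono hsw.le)
  linarith

def SingleCrossing (H F : ℝ → ℝ) : Prop :=
  ∀ ⦃z y : ℝ⦄, 0 < z → z < y → H z < F z → H y ≤ F y

lemma StarOrder.singleCrossing {μ ν : Measure ℝ} (hstar : StarOrder (cdf μ) (cdf ν))
    (hν : ∀ x < 0, cdf ν x = 0) (c : ℝ) :
    SingleCrossing (fun t => cdf ν (c * t)) (cdf μ) := by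
  intro z y hz hzy hlt
  have hy := hz.trans hzy
  rcases (cdf_le_one μ z).eq_or_lt with hFz | hFz
  · calc cdf ν (c * y) ≤ 1 := cdf_le_one _ _
      _ = cdf μ z := hFz.symm
      _ ≤ cdf μ y := monotone_cdf μ hzy.le
  -- `G (c z) < F z` forces `c z < G⁻¹ (F z)`, and the star order carries
  -- `c < G⁻¹ (F x) / x` from `x = z` to `x = y`.
  have hcz : c * z < rcInv (cdf ν) (cdf μ z) :=
    (cdf ν).lt_rcInv_of_lt ((tendsto_cdf_atTop ν).eventually_const_lt hFz).exists hlt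
  have hcy : c * y < rcInv (cdf ν) (cdf μ y) := by
    have hratio : c < rcInv (cdf ν) (cdf μ z) / z := by rw [lt_div_iff₀ hz]; linarith
    have := (lt_div_iff₀ hy).1 (hratio.trans_le (hstar hz hy hzy.le))
    linarith
  by_contra! hFy
  have hbdd : BddBelow {x | cdf μ y < cdf ν x} := by
    refine ⟨0, fun x hx => ?_⟩
    by_contra! hx0
    rw [mem_ofPred_eq, hν x hx0] at hx
    linarith [cdf_nonneg μ y]
  have : rcInv (cdf ν) (cdf μ y) ≤ c * y := csInf_le hbdd hFy
  linarith

lemma SingleCrossing.exists_level {F H : ℝ → ℝ} (hcross : SingleCrossing H F)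
    (hmono : Monotone fun x => F x + H x) (hbdd : BddAbove (range fun x => F x + H x)) :
    ∃ c, ∀ x, 0 < x → 0 ≤ (F x - H x) * (F x + H x - c) := by
  -- Points of `(0, ∞)` where `F < H` lie left of those where `H < F`, so the monotone `F + H`
  -- is separated there by a single level.
  set T := {x | 0 < x ∧ F x < H x}
  refine ⟨sSup (insert (F 0 + H 0) ((fun x => F x + H x) '' T)), fun x hx => ?_⟩
  rcases lt_trichotomy (F x) (H x) with hlt | heq | hgt
  · have : F x + H x ≤ sSup (insert (F 0 + H 0) ((fun x => F x + H x) '' T)) :=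
      le_csSup (hbdd.mono (insert_subset (mem_range_self 0) (image_subset_range _ _)))
        (mem_insert_of_mem _ ⟨x, ⟨hx, hlt⟩, rfl⟩)
    exact mul_nonneg_of_nonpos_of_nonpos (by linarith) (by linarith)
  · simp [heq]
  · have : sSup (insert (F 0 + H 0) ((fun x => F x + H x) '' T)) ≤ F x + H x := by
      refine csSup_le (insert_nonempty _ _) ?_
      rintro _ (rfl | ⟨s, ⟨hs, hFHs⟩, rfl⟩)
      · exact hmono hx.le
      · refine hmono (le_of_not_ge fun hxs => ?_)
        rcases hxs.lt_or_eq with hxs | rfl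
        · linarith [hcross hx hxs hgt]
        · linarith
    exact mul_nonneg (by linarith) (by linarith)

lemma SingleCrossing.integral_one_sub_sq_le {F H : ℝ → ℝ} (hcross : SingleCrossing H F)
    (hF : Monotone F) (hH : Monotone H) (hF1 : ∀ x, F x ≤ 1) (hH1 : ∀ x, H x ≤ 1)
    (hFi : IntegrableOn (fun t => 1 - F t) (Ioi 0))
    (hHi : IntegrableOn (fun t => 1 - H t) (Ioi 0))
    (hF2i : IntegrableOn (fun t => 1 - F t ^ 2) (Ioi 0))
    (hH2i : IntegrableOn (fun t => 1 - H t ^ 2) (Ioi 0))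
    (hmean : ∫ t in Ioi 0, (1 - F t) = ∫ t in Ioi 0, (1 - H t)) :
    ∫ t in Ioi 0, (1 - F t ^ 2) ≤ ∫ t in Ioi 0, (1 - H t ^ 2) := by
  obtain ⟨c, hc⟩ := hcross.exists_level (hF.add hH)
    ⟨2, by rintro _ ⟨x, rfl⟩; linarith [hF1 x, hH1 x]⟩
  have hpos : 0 ≤ ∫ t in Ioi 0, (F t - H t) * (F t + H t - c) :=
    setIntegral_nonneg measurableSet_Ioi hc
  have hexpand : ∫ t in Ioi 0, (F t - H t) * (F t + H t - c) =
      (∫ t in Ioi 0, (1 - H t ^ 2)) - (∫ t in Ioi 0, (1 - F t ^ 2)) -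
        c * ((∫ t in Ioi 0, (1 - H t)) - ∫ t in Ioi 0, (1 - F t)) := by
    rw [← integral_sub hH2i hF2i, ← integral_sub hHi hFi, ← integral_const_mul,
      ← integral_sub (f := fun t => 1 - H t ^ 2 - (1 - F t ^ 2))
        (g := fun t => c * (1 - H t - (1 - F t)))
        (Integrable.sub hH2i hF2i) ((Integrable.sub hHi hFi).const_mul c)]
    congr 1 with t
    ring
  rw [hexpand, hmean, sub_self, mul_zero, sub_zero] at hpos
  linarith

lemma StarOrder.integral_one_sub_cdf_sq_div_le {μ ν : Measure ℝ}
    (hstar : StarOrder (cdf μ) (cdf ν)) (hν : ∀ x < 0, cdf ν x = 0)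
    (hFi : IntegrableOn (fun t => 1 - cdf μ t) (Ioi 0))
    (hGi : IntegrableOn (fun t => 1 - cdf ν t) (Ioi 0))
    (hF2i : IntegrableOn (fun t => 1 - cdf μ t ^ 2) (Ioi 0))
    (hG2i : IntegrableOn (fun t => 1 - cdf ν t ^ 2) (Ioi 0))
    (hmF : 0 < ∫ t in Ioi 0, (1 - cdf μ t)) (hmG : 0 < ∫ t in Ioi 0, (1 - cdf ν t)) :
    (∫ t in Ioi 0, (1 - cdf μ t ^ 2)) / ∫ t in Ioi 0, (1 - cdf μ t) ≤
      (∫ t in Ioi 0, (1 - cdf ν t ^ 2)) / ∫ t in Ioi 0, (1 - cdf ν t) := by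
  set c := (∫ t in Ioi 0, (1 - cdf ν t)) / ∫ t in Ioi 0, (1 - cdf μ t) with hc_def
  have hc : 0 < c := div_pos hmG hmF
  have hscale (f : ℝ → ℝ) (hf : IntegrableOn f (Ioi 0)) :
      IntegrableOn (fun t => f (c * t)) (Ioi 0) :=
    (integrableOn_Ioi_comp_mul_left_iff f 0 hc).2 (by rwa [mul_zero])
  have hintegral (f : ℝ → ℝ) : ∫ t in Ioi 0, f (c * t) = c⁻¹ * ∫ t in Ioi 0, f t := by
    rw [integral_comp_mul_left_Ioi f 0 hc, mul_zero, smul_eq_mul]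
  have hmean : ∫ t in Ioi 0, (1 - cdf μ t) = ∫ t in Ioi 0, (1 - cdf ν (c * t)) := by
    rw [hintegral fun s => 1 - cdf ν s, hc_def]
    field_simp
  have hcompare := (hstar.singleCrossing hν c).integral_one_sub_sq_le (monotone_cdf μ)
    (fun a b hab => monotone_cdf ν (by gcongr)) (cdf_le_one μ) (fun t => cdf_le_one ν _)
    hFi (hscale _ hGi) hF2i (hscale _ hG2i) hmean
  rw [hintegral fun s => 1 - cdf ν s ^ 2] at hcompare
  calc (∫ t in Ioi 0, (1 - cdf μ t ^ 2)) / ∫ t in Ioi 0, (1 - cdf μ t)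
      ≤ (c⁻¹ * ∫ t in Ioi 0, (1 - cdf ν t ^ 2)) / ∫ t in Ioi 0, (1 - cdf μ t) := by gcongr
    _ = (∫ t in Ioi 0, (1 - cdf ν t ^ 2)) / ∫ t in Ioi 0, (1 - cdf ν t) := by
      rw [hc_def]
      field_simp

lemma integrableOn_Ioi_measureReal_lt {α : Type*} [MeasurableSpace α] {μ : Measure α}
    {f : α → ℝ} (hf : Integrable f μ) (hf0 : 0 ≤ᵐ[μ] f) :
    IntegrableOn (fun t => μ.real {a | t < f a}) (Ioi 0) := by
  have hmeas : Measurable fun t : ℝ => μ {a | t < f a} :=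
    Antitone.measurable fun _ _ hst => measure_mono fun _ h => hst.trans_lt h
  refine ⟨hmeas.ennreal_toReal.aestronglyMeasurable, ?_⟩
  have hfin : ∫⁻ t in Ioi 0, μ {a | t < f a} < ⊤ := by
    rw [← lintegral_eq_lintegral_meas_lt μ hf0 hf.aemeasurable]
    exact hf.lintegral_lt_top
  refine lt_of_le_of_lt (lintegral_mono fun t => ?_) hfin
  rw [Real.enorm_eq_ofReal measureReal_nonneg]
  exact ENNReal.ofReal_toReal_le

section RandomVariables

variable {Ω : Type*} [MeasurableSpace Ω] {P : Measure Ω} {Z X X₁ X₂ : Ω → ℝ}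

lemma one_sub_cdf_map [IsProbabilityMeasure P] (hZ : AEMeasurable Z P) (t : ℝ) :
    1 - cdf (P.map Z) t = P.real {ω | t < Z ω} := by
  have := Measure.isProbabilityMeasure_map hZ
  rw [cdf_eq_real, ← probReal_compl_eq_one_sub measurableSet_Iic, compl_Iic,
    map_measureReal_apply_of_aemeasurable hZ measurableSet_Ioi]
  rfl

lemma cdf_map_eq_zero_of_neg [IsProbabilityMeasure P] (hZ : AEMeasurable Z P)
    (hZ0 : 0 ≤ᵐ[P] Z) {x : ℝ} (hx : x < 0) : cdf (P.map Z) x = 0 := by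
  have := Measure.isProbabilityMeasure_map hZ
  rw [cdf_eq_real, map_measureReal_apply_of_aemeasurable hZ measurableSet_Iic,
    measureReal_eq_zero_iff, measure_eq_zero_iff_ae_notMem]
  filter_upwards [hZ0] with ω hω
  exact fun hle => (hle.trans_lt hx).not_ge hω

lemma integrableOn_Ioi_one_sub_cdf_map [IsProbabilityMeasure P] (hZ : Integrable Z P)
    (hZ0 : 0 ≤ᵐ[P] Z) : IntegrableOn (fun t => 1 - cdf (P.map Z) t) (Ioi 0) := by
  simpa only [one_sub_cdf_map hZ.aemeasurable] using integrableOn_Ioi_measureReal_lt hZ hZ0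

lemma integral_eq_integral_Ioi_one_sub_cdf_map [IsProbabilityMeasure P] (hZ : Integrable Z P)
    (hZ0 : 0 ≤ᵐ[P] Z) : ∫ ω, Z ω ∂P = ∫ t in Ioi 0, (1 - cdf (P.map Z) t) := by
  simp only [one_sub_cdf_map hZ.aemeasurable]
  exact hZ.integral_eq_integral_meas_lt hZ0

lemma cdf_map_max [IsProbabilityMeasure P] (h₁ : AEMeasurable X₁ P) (h₂ : AEMeasurable X₂ P)
    (hind : IndepFun X₁ X₂ P) (t : ℝ) :
    cdf (P.map fun ω => max (X₁ ω) (X₂ ω)) t = cdf (P.map X₁) t * cdf (P.map X₂) t := by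
  have := Measure.isProbabilityMeasure_map h₁
  have := Measure.isProbabilityMeasure_map h₂
  have := Measure.isProbabilityMeasure_map (h₁.max h₂)
  have hset : (fun ω => max (X₁ ω) (X₂ ω)) ⁻¹' Iic t = X₁ ⁻¹' Iic t ∩ X₂ ⁻¹' Iic t := by
    ext ω
    simp
  simp only [cdf_eq_real, map_measureReal_apply_of_aemeasurable (h₁.max h₂) measurableSet_Iic,
    map_measureReal_apply_of_aemeasurable h₁ measurableSet_Iic,
    map_measureReal_apply_of_aemeasurable h₂ measurableSet_Iic, hset, measureReal_def,
    hind.measure_inter_preimage_eq_mul _ _ measurableSet_Iic measurableSet_Iic,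
    ENNReal.toReal_mul]

lemma cdf_map_max_of_identDistrib [IsProbabilityMeasure P] (h₁ : IdentDistrib X₁ X P P)
    (h₂ : IdentDistrib X₂ X P P) (hind : IndepFun X₁ X₂ P) (t : ℝ) :
    cdf (P.map fun ω => max (X₁ ω) (X₂ ω)) t = cdf (P.map X) t ^ 2 := by
  rw [cdf_map_max h₁.aemeasurable_fst h₂.aemeasurable_fst hind, h₁.map_eq, h₂.map_eq, sq]

lemma integrable_max_of_identDistrib (hX : Integrable X P) (h₁ : IdentDistrib X₁ X P P)
    (h₂ : IdentDistrib X₂ X P P) : Integrable (fun ω => max (X₁ ω) (X₂ ω)) P :=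
  (h₁.integrable_iff.2 hX).sup (h₂.integrable_iff.2 hX)

lemma ae_nonneg_max_of_identDistrib (hX0 : 0 ≤ᵐ[P] X) (h₁ : IdentDistrib X₁ X P P) :
    0 ≤ᵐ[P] fun ω => max (X₁ ω) (X₂ ω) := by
  filter_upwards [h₁.symm.ae_mem_snd measurableSet_Ici hX0] with ω hω
  exact le_max_of_le_left hω

lemma integrableOn_Ioi_one_sub_cdf_sq [IsProbabilityMeasure P] (hX : Integrable X P)
    (hX0 : 0 ≤ᵐ[P] X) (h₁ : IdentDistrib X₁ X P P) (h₂ : IdentDistrib X₂ X P P)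
    (hind : IndepFun X₁ X₂ P) :
    IntegrableOn (fun t => 1 - cdf (P.map X) t ^ 2) (Ioi 0) := by
  simpa only [cdf_map_max_of_identDistrib h₁ h₂ hind] using integrableOn_Ioi_one_sub_cdf_map
    (integrable_max_of_identDistrib hX h₁ h₂) (ae_nonneg_max_of_identDistrib (X₂ := X₂) hX0 h₁)

lemma integral_max_eq_integral_Ioi_one_sub_cdf_sq [IsProbabilityMeasure P] (hX : Integrable X P)
    (hX0 : 0 ≤ᵐ[P] X) (h₁ : IdentDistrib X₁ X P P) (h₂ : IdentDistrib X₂ X P P)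
    (hind : IndepFun X₁ X₂ P) :
    ∫ ω, max (X₁ ω) (X₂ ω) ∂P = ∫ t in Ioi 0, (1 - cdf (P.map X) t ^ 2) := by
  simpa only [cdf_map_max_of_identDistrib h₁ h₂ hind] using
    integral_eq_integral_Ioi_one_sub_cdf_map (integrable_max_of_identDistrib hX h₁ h₂)
      (ae_nonneg_max_of_identDistrib hX0 h₁)

end RandomVariables

theorem stmt0_general {Ω : Type*} [MeasureSpace Ω] [IsProbabilityMeasure (ℙ : Measure Ω)]
    (X Y X₁ X₂ Y₁ Y₂ : Ω → ℝ)
    (hX1m : Measurable X₁) (hX2m : Measurable X₂)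
    (hY1m : Measurable Y₁) (hY2m : Measurable Y₂)
    (hXpos : ∀ ω, 0 ≤ X ω) (hYpos : ∀ ω, 0 ≤ Y ω)
    (hXint : Integrable X ℙ) (hYint : Integrable Y ℙ)
    (hμF : 0 < ∫ ω, X ω) (hμG : 0 < ∫ ω, Y ω)
    (hX1d : Measure.map X₁ ℙ = Measure.map X ℙ) (hX2d : Measure.map X₂ ℙ = Measure.map X ℙ)
    (hY1d : Measure.map Y₁ ℙ = Measure.map Y ℙ) (hY2d : Measure.map Y₂ ℙ = Measure.map Y ℙ)
    (hXindep : IndepFun X₁ X₂ ℙ) (hYindep : IndepFun Y₁ Y₂ ℙ)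
    (hstar : StarOrder (fun x => cdf (Measure.map X ℙ) x) (fun x => cdf (Measure.map Y ℙ) x)) :
    (∫ ω, max (X₁ ω) (X₂ ω)) / (∫ ω, X ω) ≤ (∫ ω, max (Y₁ ω) (Y₂ ω)) / (∫ ω, Y ω) := by
  have hX₁ : IdentDistrib X₁ X ℙ ℙ := ⟨hX1m.aemeasurable, hXint.aemeasurable, hX1d⟩
  have hX₂ : IdentDistrib X₂ X ℙ ℙ := ⟨hX2m.aemeasurable, hXint.aemeasurable, hX2d⟩
  have hY₁ : IdentDistrib Y₁ Y ℙ ℙ := ⟨hY1m.aemeasurable, hYint.aemeasurable, hY1d⟩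
  have hY₂ : IdentDistrib Y₂ Y ℙ ℙ := ⟨hY2m.aemeasurable, hYint.aemeasurable, hY2d⟩
  have hX0 : 0 ≤ᵐ[ℙ] X := ae_of_all _ hXpos
  have hY0 : 0 ≤ᵐ[ℙ] Y := ae_of_all _ hYpos
  rw [integral_eq_integral_Ioi_one_sub_cdf_map hXint hX0] at hμF ⊢
  rw [integral_eq_integral_Ioi_one_sub_cdf_map hYint hY0] at hμG ⊢
  rw [integral_max_eq_integral_Ioi_one_sub_cdf_sq hXint hX0 hX₁ hX₂ hXindep,
    integral_max_eq_integral_Ioi_one_sub_cdf_sq hYint hY0 hY₁ hY₂ hYindep]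
  exact hstar.integral_one_sub_cdf_sq_div_le
    (fun x hx => cdf_map_eq_zero_of_neg hYint.aemeasurable hY0 hx)
    (integrableOn_Ioi_one_sub_cdf_map hXint hX0) (integrableOn_Ioi_one_sub_cdf_map hYint hY0)
    (integrableOn_Ioi_one_sub_cdf_sq hXint hX0 hX₁ hX₂ hXindep)
    (integrableOn_Ioi_one_sub_cdf_sq hYint hY0 hY₁ hY₂ hYindep) hμF hμG

/-- If `F ≤_* G` then `E[max{X₁,X₂}]/E[X] ≤ E[max{Y₁,Y₂}]/E[Y]`. -/
theorem stmt0 {Ω : Type*} [MeasureSpace Ω] [IsProbabilityMeasure (ℙ : Measure Ω)]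
    (X Y X₁ X₂ Y₁ Y₂ : Ω → ℝ)
    (hXm : Measurable X) (hYm : Measurable Y)
    (hX1m : Measurable X₁) (hX2m : Measurable X₂)
    (hY1m : Measurable Y₁) (hY2m : Measurable Y₂)
    (hXpos : ∀ ω, 0 ≤ X ω) (hYpos : ∀ ω, 0 ≤ Y ω)
    (hXint : Integrable X ℙ) (hYint : Integrable Y ℙ)
    (hμF : 0 < ∫ ω, X ω) (hμG : 0 < ∫ ω, Y ω)
    (hX1d : Measure.map X₁ ℙ = Measure.map X ℙ) (hX2d : Measure.map X₂ ℙ = Measure.map X ℙ)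
    (hY1d : Measure.map Y₁ ℙ = Measure.map Y ℙ) (hY2d : Measure.map Y₂ ℙ = Measure.map Y ℙ)
    (hXindep : IndepFun X₁ X₂ ℙ) (hYindep : IndepFun Y₁ Y₂ ℙ)
    (hstar : StarOrder (fun x => cdf (Measure.map X ℙ) x) (fun x => cdf (Measure.map Y ℙ) x)) :
    (∫ ω, max (X₁ ω) (X₂ ω)) / (∫ ω, X ω) ≤ (∫ ω, max (Y₁ ω) (Y₂ ω)) / (∫ ω, Y ω) :=
  stmt0_general X Y X₁ X₂ Y₁ Y₂ hX1m hX2m hY1m hY2m hXpos hYpos hXint hYint hμF hμG hX1d hX2d hY1d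
    hY2d hXindep hYindep hstar
end

section
/- Let F and G be continuous, strictly increasing distribution functions of positive random variables. If F ≤_* G and G ≤_* F, then there exists a constant a > 0 such that F(x) = G(ax) for all x ≥ 0. -/
open MeasureTheory ProbabilityTheory Set

/-!
Put `φ = G⁻¹ ∘ F`. Continuity of `G` gives `G (φ x) = F x`, and strict monotonicity of `F`
then gives `F⁻¹ (G (φ x)) = x`. So `F ≤_* G` says that `φ x / x` is nondecreasing, while
`G ≤_* F`, evaluated at the (nondecreasing) points `φ x`, says that `x / φ x` is nondecreasing.
Hence `φ x / x` is a constant `a`, and `F x = G (φ x) = G (a x)`.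
-/

open Filter

lemma map_rcInv_eq {G : ℝ → ℝ} (hG : Continuous G) {u : ℝ} (hne : ∃ x, u < G x)
    (hbdd : BddBelow {x | u < G x}) : G (rcInv G u) = u := by
  apply le_antisymm
  · have hleft : ∀ x : ℝ, x < rcInv G u → G x ≤ u := fun x hx =>
      not_lt.mp (notMem_of_lt_csInf (s := {x | u < G x}) hx hbdd)
    exact le_of_tendsto (hG.continuousAt.tendsto.mono_left nhdsWithin_le_nhds)
      (eventually_nhdsWithin_of_forall (s := Iio _) hleft)
  · exact closure_lt_subset_le continuous_const hG (csInf_mem_closure hne hbdd)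

lemma cdf_rcInv_eq (μ : Measure ℝ) (hcont : Continuous (cdf μ)) {u : ℝ} (hu0 : 0 < u)
    (hu1 : u < 1) : cdf μ (rcInv (cdf μ) u) = u := by
  refine map_rcInv_eq hcont ((tendsto_cdf_atTop μ).eventually (eventually_gt_nhds hu1)).exists ?_
  obtain ⟨b, hb⟩ := eventually_atBot.mp ((tendsto_cdf_atBot μ).eventually (eventually_lt_nhds hu0))
  exact ⟨b, fun x hx => (monotone_cdf μ).reflect_lt ((hb b le_rfl).trans hx) |>.le⟩

lemma rcInv_apply_self {F : ℝ → ℝ} (hF : Monotone F) {x : ℝ} (hx : ∀ y, x < y → F x < F y) :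
    rcInv F (F x) = x := by
  have hset : {y | F x < F y} = Ioi x :=
    Set.ext fun y => ⟨fun hy => hF.reflect_lt hy, hx y⟩
  rw [rcInv, hset, csInf_Ioi]

lemma cdf_map_eq_zero_of_pos {Ω : Type*} [MeasurableSpace Ω] (P : Measure Ω)
    [IsProbabilityMeasure P] {X : Ω → ℝ} (hX : Measurable X) (hpos : ∀ ω, 0 < X ω) {x : ℝ}
    (hx : x ≤ 0) : cdf (P.map X) x = 0 := by
  have : IsProbabilityMeasure (P.map X) := Measure.isProbabilityMeasure_map hX.aemeasurable
  have hempty : X ⁻¹' Iic x = ∅ :=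
    eq_empty_of_forall_notMem fun ω hω => (hpos ω).not_ge (le_trans hω hx)
  rw [cdf_eq_real, measureReal_def, Measure.map_apply hX measurableSet_Iic, hempty,
    measure_empty, ENNReal.toReal_zero]

section RatioOfInverseMaps

variable {φ ψ : ℝ → ℝ} (hφpos : ∀ x, 0 < x → 0 < φ x)
  (hφ : MonotoneOn (fun x => φ x / x) (Ioi 0)) (hψ : MonotoneOn (fun y => ψ y / y) (Ioi 0))
  (hψφ : ∀ x, 0 < x → ψ (φ x) = x)
include hφpos hφ hψ hψφ

lemma div_eq_div_of_monotoneOn_div {x z : ℝ} (hx : 0 < x) (hxz : x ≤ z) :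
    φ x / x = φ z / z := by
  have hz : 0 < z := hx.trans_le hxz
  have hφx := hφpos x hx
  have hφz := hφpos z hz
  have hφ_le : φ x / x ≤ φ z / z := hφ hx hz hxz
  have hφxz : φ x ≤ φ z := by
    rw [div_le_div_iff₀ hx hz] at hφ_le
    nlinarith
  have hψ_le : x / φ x ≤ z / φ z := by
    simpa only [hψφ x hx, hψφ z hz] using hψ hφx hφz hφxz
  rw [div_le_div_iff₀ hφx hφz] at hψ_le
  rw [div_le_div_iff₀ hx hz] at hφ_le
  rw [div_eq_div_iff hx.ne' hz.ne']
  linarith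

lemma eq_mul_of_monotoneOn_div {x : ℝ} (hx : 0 < x) : φ x = φ 1 * x := by
  have hratio : φ x / x = φ 1 / 1 := by
    rcases le_total x 1 with h | h
    · exact div_eq_div_of_monotoneOn_div hφpos hφ hψ hψφ hx h
    · exact (div_eq_div_of_monotoneOn_div hφpos hφ hψ hψφ one_pos h).symm
  rwa [div_one, div_eq_iff hx.ne'] at hratio

end RatioOfInverseMaps

theorem stmt2_general {Ω : Type*} [MeasureSpace Ω] [IsProbabilityMeasure (ℙ : Measure Ω)]
    (X Y : Ω → ℝ) (hXm : Measurable X) (hYm : Measurable Y)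
    (hXpos : ∀ ω, 0 < X ω) (hYpos : ∀ ω, 0 < Y ω)
    (F G : ℝ → ℝ)
    (hF : F = fun x => cdf (Measure.map X ℙ) x)
    (hG : G = fun x => cdf (Measure.map Y ℙ) x)
    (hGcont : Continuous G)
    (hFmono : StrictMonoOn F (Set.Ici (0 : ℝ)))
    (hFG : StarOrder F G) (hGF : StarOrder G F) :
    ∃ a : ℝ, 0 < a ∧ ∀ x : ℝ, 0 ≤ x → F x = G (a * x) := by
  have hF0 : F 0 = 0 := hF ▸ cdf_map_eq_zero_of_pos ℙ hXm hXpos le_rfl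
  have hG0 : G 0 = 0 := hG ▸ cdf_map_eq_zero_of_pos ℙ hYm hYpos le_rfl
  have hFmonotone : Monotone F := hF ▸ monotone_cdf _
  have hGmonotone : Monotone G := hG ▸ monotone_cdf _
  have hFpos : ∀ x, 0 < x → 0 < F x := fun x hx => hF0 ▸ hFmono self_mem_Ici hx.le hx
  have hGφ : ∀ x, 0 < x → G (rcInv G (F x)) = F x := by
    intro x hx
    have hFx_lt_one : F x < 1 := (hFmono hx.le (mem_Ici.mpr (by linarith)) (lt_add_one x)).trans_le
      (hF ▸ cdf_le_one _ _)
    subst hG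
    exact cdf_rcInv_eq _ hGcont (hFpos x hx) hFx_lt_one
  have hφpos : ∀ x, 0 < x → 0 < rcInv G (F x) := fun x hx =>
    hGmonotone.reflect_lt (by rw [hG0, hGφ x hx]; exact hFpos x hx)
  have hψφ : ∀ x, 0 < x → rcInv F (G (rcInv G (F x))) = x := fun x hx => by
    rw [hGφ x hx, rcInv_apply_self hFmonotone fun y hy => hFmono hx.le (hx.trans hy).le hy]
  refine ⟨rcInv G (F 1), hφpos 1 one_pos, fun x hx => ?_⟩
  rcases hx.eq_or_lt with rfl | hx
  · rw [mul_zero, hF0, hG0]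
  · rw [← eq_mul_of_monotoneOn_div hφpos hFG hGF hψφ hx, hGφ x hx]

/-- If `F` and `G` are continuous strictly increasing distribution functions of positive
random variables and both `F ≤_* G` and `G ≤_* F`, then `F(x) = G(ax)` for all `x ≥ 0`
and some `a > 0`. -/
theorem stmt2 {Ω : Type*} [MeasureSpace Ω] [IsProbabilityMeasure (ℙ : Measure Ω)]
    (X Y : Ω → ℝ) (hXm : Measurable X) (hYm : Measurable Y)
    (hXpos : ∀ ω, 0 < X ω) (hYpos : ∀ ω, 0 < Y ω)
    (F G : ℝ → ℝ)
    (hF : F = fun x => cdf (Measure.map X ℙ) x)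
    (hG : G = fun x => cdf (Measure.map Y ℙ) x)
    (hFcont : Continuous F) (hGcont : Continuous G)
    (hFmono : StrictMonoOn F (Set.Ici (0 : ℝ))) (hGmono : StrictMonoOn G (Set.Ici (0 : ℝ)))
    (hFG : StarOrder F G) (hGF : StarOrder G F) :
    ∃ a : ℝ, 0 < a ∧ ∀ x : ℝ, 0 ≤ x → F x = G (a * x) :=
  stmt2_general X Y hXm hYm hXpos hYpos F G hF hG hGcont hFmono hFG hGF
end

section
/- Let X be an exponential random variable with rate λ > 0, distribution function E_λ(x) = 1 − exp(−λx), and mean μ = 1/λ. Then (4/μ²)·Var(X·E_λ(X) + ∫_X^∞ t dE_λ(t) − (3/4)·X) = 1/12; that is, the asymptotic variance σ²_{E_λ} of the test statistic under exponentiality equals 1/12. -/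
/-!
For `x ≥ 0` the tail mean of the exponential law is `∫_x^∞ t dE_λ(t) = (x + 1/λ) e^{-λx}`
(shift the integral to `Ioi 0`: this is memorylessness), so almost surely the statistic collapses
to `h(X) = X/4 + e^{-λX}/λ`. Both `h` and `h²` are combinations of `x^n e^{-ax}`, whose integrals
against `E_λ` are `λ n!/(λ+a)^{n+1}`; this gives `E h(X) = 3/(4λ)`, `E h(X)² = 7/(12λ²)` and
`Var h(X) = 1/(48λ²) = μ²/48`.
-/

open MeasureTheory ProbabilityTheory Set Real
open scoped Nat

lemma integral_pow_mul_exp_neg_mul_Ioi (n : ℕ) {a : ℝ} (ha : 0 < a) :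
    ∫ t in Ioi (0 : ℝ), t ^ n * exp (-(a * t)) = n ! / a ^ (n + 1) := by
  have h := integral_rpow_mul_exp_neg_mul_Ioi (a := n + 1) (by positivity) ha
  rw [Real.Gamma_nat_eq_factorial, add_sub_cancel_right, one_div, inv_rpow ha.le,
    ← Nat.cast_succ, rpow_natCast, ← div_eq_inv_mul] at h
  rw [← h]
  refine setIntegral_congr_fun measurableSet_Ioi fun t _ => ?_
  simp only [rpow_natCast]

lemma integrableOn_pow_mul_exp_neg_mul_Ioi (n : ℕ) {a : ℝ} (ha : 0 < a) :
    IntegrableOn (fun t : ℝ => t ^ n * exp (-(a * t))) (Ioi 0) :=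
  Integrable.of_integral_ne_zero <| by
    rw [integral_pow_mul_exp_neg_mul_Ioi n ha]; positivity

lemma setIntegral_Ioi_comp_add_right (f : ℝ → ℝ) (a d : ℝ) :
    ∫ x in Ioi a, f (x + d) = ∫ x in Ioi (a + d), f x := by
  have hemb : MeasurableEmbedding fun x : ℝ => x + d :=
    (Homeomorph.addRight d).isClosedEmbedding.measurableEmbedding
  conv_rhs => rw [← map_add_right_eq_self volume d, hemb.setIntegral_map, preimage_add_const_Ioi,
    add_sub_cancel_right]

lemma expMeasure_eq_withDensity_Ioi (l : ℝ) :
    expMeasure l = (volume.restrict (Ioi 0)).withDensity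
      fun x => ENNReal.ofReal (l * exp (-(l * x))) := by
  have hpdf :
      exponentialPDF l = (Ici 0).indicator fun x => ENNReal.ofReal (l * exp (-(l * x))) := by
    ext x
    by_cases hx : 0 ≤ x <;> simp [exponentialPDF_eq, hx]
  change volume.withDensity (exponentialPDF l) = _
  rw [hpdf, withDensity_indicator measurableSet_Ici, Measure.restrict_congr_set Ioi_ae_eq_Ici]

lemma ae_nonneg_expMeasure (l : ℝ) : ∀ᵐ x ∂expMeasure l, 0 ≤ x := by
  rw [expMeasure_eq_withDensity_Ioi]
  filter_upwards [(withDensity_absolutelyContinuous _ _).ae_le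
    (ae_restrict_mem measurableSet_Ioi)] with x hx
  exact le_of_lt hx

lemma setIntegral_expMeasure {l : ℝ} (hl : 0 ≤ l) {s : Set ℝ} (hs : MeasurableSet s)
    (g : ℝ → ℝ) :
    ∫ x in s, g x ∂expMeasure l = ∫ x in s ∩ Ioi 0, l * exp (-(l * x)) * g x := by
  rw [expMeasure_eq_withDensity_Ioi, setIntegral_withDensity_eq_setIntegral_toReal_smul
    (by fun_prop) (ae_of_all _ fun _ => ENNReal.ofReal_lt_top) g hs,
    Measure.restrict_restrict hs]
  simp only [smul_eq_mul, ENNReal.toReal_ofReal (by positivity : 0 ≤ l * exp _)]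

lemma integral_expMeasure {l : ℝ} (hl : 0 ≤ l) (g : ℝ → ℝ) :
    ∫ x, g x ∂expMeasure l = ∫ x in Ioi 0, l * exp (-(l * x)) * g x := by
  rw [← setIntegral_univ, setIntegral_expMeasure hl MeasurableSet.univ, univ_inter]

lemma integrable_expMeasure_iff {l : ℝ} (hl : 0 ≤ l) {g : ℝ → ℝ} :
    Integrable g (expMeasure l) ↔ IntegrableOn (fun x => l * exp (-(l * x)) * g x) (Ioi 0) := by
  rw [expMeasure_eq_withDensity_Ioi, integrable_withDensity_iff (by fun_prop)
    (ae_of_all _ fun _ => ENNReal.ofReal_lt_top), IntegrableOn]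
  simp only [ENNReal.toReal_ofReal (by positivity : 0 ≤ l * exp _), mul_comm (g _)]

lemma integrable_pow_mul_exp_neg_mul_expMeasure (n : ℕ) {l a : ℝ} (hl : 0 ≤ l)
    (ha : 0 < l + a) :
    Integrable (fun x => x ^ n * exp (-(a * x))) (expMeasure l) := by
  rw [integrable_expMeasure_iff hl]
  refine IntegrableOn.congr_fun ((integrableOn_pow_mul_exp_neg_mul_Ioi n ha).const_mul l)
    (fun x _ => ?_) measurableSet_Ioi
  rw [add_mul, neg_add, exp_add]
  ring

lemma integral_pow_mul_exp_neg_mul_expMeasure (n : ℕ) {l a : ℝ} (hl : 0 ≤ l)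
    (ha : 0 < l + a) :
    ∫ x, x ^ n * exp (-(a * x)) ∂expMeasure l = l * n ! / (l + a) ^ (n + 1) := by
  rw [integral_expMeasure hl, mul_div_assoc, ← integral_pow_mul_exp_neg_mul_Ioi n ha,
    ← integral_const_mul]
  refine setIntegral_congr_fun measurableSet_Ioi fun x _ => ?_
  rw [add_mul, neg_add, exp_add]
  ring

lemma integrable_id_expMeasure {l : ℝ} (hl : 0 < l) : Integrable (fun x => x) (expMeasure l) := by
  simpa using integrable_pow_mul_exp_neg_mul_expMeasure 1 hl.le (a := 0) (by simpa)

lemma integral_id_expMeasure {l : ℝ} (hl : 0 < l) : ∫ x, x ∂expMeasure l = 1 / l := by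
  simpa [sq] using integral_pow_mul_exp_neg_mul_expMeasure 1 hl.le (a := 0) (by simpa)

lemma setIntegral_Ioi_id_expMeasure {l c : ℝ} (hl : 0 < l) (hc : 0 ≤ c) :
    ∫ t in Ioi c, t ∂expMeasure l = (c + 1 / l) * exp (-(l * c)) := by
  have := isProbabilityMeasure_expMeasure hl
  calc ∫ t in Ioi c, t ∂expMeasure l
      = ∫ x in Ioi 0, l * exp (-(l * (x + c))) * (x + c) := by
        rw [setIntegral_expMeasure hl.le measurableSet_Ioi, Ioi_inter_Ioi, sup_eq_left.2 hc,
          setIntegral_Ioi_comp_add_right (fun x => l * exp (-(l * x)) * x), zero_add]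
    _ = ∫ x, exp (-(l * c)) * (x + c) ∂expMeasure l := by
        rw [integral_expMeasure hl.le]
        refine setIntegral_congr_fun measurableSet_Ioi fun x _ => ?_
        rw [mul_add l, neg_add, exp_add]
        ring
    _ = (c + 1 / l) * exp (-(l * c)) := by
        rw [integral_const_mul, integral_add (integrable_id_expMeasure hl) (integrable_const c),
          integral_id_expMeasure hl, integral_const, probReal_univ, one_smul]
        ring

lemma variance_expMeasure_div_four_add_exp_neg {l : ℝ} (hl : 0 < l) :
    Var[fun x => x / 4 + exp (-(l * x)) / l; expMeasure l] = 1 / (48 * l ^ 2) := by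
  have := isProbabilityMeasure_expMeasure hl
  have hint (n : ℕ) {a : ℝ} (ha : 0 ≤ a) :=
    integrable_pow_mul_exp_neg_mul_expMeasure n hl.le (a := a) (by positivity)
  have hmom (n : ℕ) {a : ℝ} (ha : 0 ≤ a) :=
    integral_pow_mul_exp_neg_mul_expMeasure n hl.le (a := a) (by positivity)
  have hfun : (fun x => x / 4 + exp (-(l * x)) / l) = fun x =>
      1 / 4 * (x ^ 1 * exp (-(0 * x))) + 1 / l * (x ^ 0 * exp (-(l * x))) := by
    ext x; simp only [zero_mul, neg_zero, exp_zero]; ring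
  have hsq : (fun x => (x / 4 + exp (-(l * x)) / l) ^ 2) = fun x =>
      1 / 16 * (x ^ 2 * exp (-(0 * x))) + (1 / (2 * l) * (x ^ 1 * exp (-(l * x)))
        + 1 / l ^ 2 * (x ^ 0 * exp (-(2 * l * x)))) := by
    ext x
    have hexp : exp (-(2 * l * x)) = exp (-(l * x)) ^ 2 := by rw [sq, ← exp_add]; ring_nf
    rw [hexp]; simp only [zero_mul, neg_zero, exp_zero]; field_simp; ring
  have htail : Integrable (fun x => 1 / (2 * l) * (x ^ 1 * exp (-(l * x)))
      + 1 / l ^ 2 * (x ^ 0 * exp (-(2 * l * x)))) (expMeasure l) :=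
    ((hint 1 hl.le).const_mul _).add ((hint 0 (by positivity)).const_mul _)
  have hsq_int : Integrable (fun x => (x / 4 + exp (-(l * x)) / l) ^ 2) (expMeasure l) := by
    rw [hsq]
    exact ((hint 2 le_rfl).const_mul _).add htail
  have hmean : ∫ x, x / 4 + exp (-(l * x)) / l ∂expMeasure l = 3 / (4 * l) := by
    rw [hfun, integral_add ((hint 1 le_rfl).const_mul _) ((hint 0 hl.le).const_mul _),
      integral_const_mul, integral_const_mul, hmom 1 le_rfl, hmom 0 hl.le]
    field_simp; norm_num; ring
  have hsecond : ∫ x, (x / 4 + exp (-(l * x)) / l) ^ 2 ∂expMeasure l = 7 / (12 * l ^ 2) := by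
    rw [hsq, integral_add ((hint 2 le_rfl).const_mul _) htail,
      integral_add ((hint 1 hl.le).const_mul _) ((hint 0 (by positivity)).const_mul _),
      integral_const_mul, integral_const_mul, integral_const_mul, hmom 2 le_rfl, hmom 1 hl.le,
      hmom 0 (by positivity)]
    field_simp; norm_num; ring
  rw [variance_eq_sub ((memLp_two_iff_integrable_sq (by fun_prop)).2 hsq_int)]
  simp only [Pi.pow_apply]
  rw [hsecond, hmean]
  field_simp; ring

theorem stmt7_general {Ω : Type*} [MeasureSpace Ω]
    (X : Ω → ℝ) (hXm : Measurable X)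
    (l : ℝ) (hl : 0 < l)
    (hXd : Measure.map X ℙ = expMeasure l)
    (μ : ℝ) (hμ : μ = 1 / l) :
    4 / μ ^ 2 * variance (fun ω =>
        X ω * (1 - Real.exp (-l * X ω))
          + (∫ t in Set.Ioi (X ω), t ∂(expMeasure l))
          - 3 / 4 * X ω) ℙ = 1 / 12 := by
  have hX : MeasurePreserving X ℙ (expMeasure l) := ⟨hXm, hXd⟩
  have hstat : (fun ω => X ω * (1 - exp (-l * X ω)) + (∫ t in Ioi (X ω), t ∂expMeasure l)
      - 3 / 4 * X ω) =ᵐ[ℙ] fun ω => X ω / 4 + exp (-(l * X ω)) / l := by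
    filter_upwards [hX.quasiMeasurePreserving.ae (ae_nonneg_expMeasure l)] with ω hω
    rw [setIntegral_Ioi_id_expMeasure hl hω, neg_mul]
    ring
  rw [variance_congr hstat, hX.variance_fun_comp (f := fun x => x / 4 + exp (-(l * x)) / l)
    (by fun_prop), variance_expMeasure_div_four_add_exp_neg hl, hμ]
  field_simp
  norm_num

/-- For `X` exponential with rate `λ > 0`, mean `μ = 1/λ` and distribution function
`E_λ(x) = 1 − exp(−λx)`, the asymptotic variance of the test statistic is
`(4/μ²)·Var(X·E_λ(X) + ∫_X^∞ t dE_λ(t) − (3/4)X) = 1/12`. -/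
theorem stmt7 {Ω : Type*} [MeasureSpace Ω] [IsProbabilityMeasure (ℙ : Measure Ω)]
    (X : Ω → ℝ) (hXm : Measurable X)
    (l : ℝ) (hl : 0 < l)
    (hXd : Measure.map X ℙ = expMeasure l)
    (μ : ℝ) (hμ : μ = 1 / l) :
    4 / μ ^ 2 * variance (fun ω =>
        X ω * (1 - Real.exp (-l * X ω))
          + (∫ t in Set.Ioi (X ω), t ∂(expMeasure l))
          - 3 / 4 * X ω) ℙ = 1 / 12 :=
  stmt7_general X hXm l hl hXd μ hμ
end

section
/- Let X₁, X₂, ... be i.i.d. nonnegative random variables with distribution function F, finite positive mean μ_F, δ_F = E[max{X₁,X₂}]/μ_F, and E[(max{X₁,X₂} − (δ_F/2)(X₁+X₂))²] < ∞. Let G₀ be a fixed distribution with δ_{G₀} and σ_{G₀} > 0 given constants. If δ_F − δ_{G₀} < 0, then for every α ∈ (0,1), P(√n(δ̂_n − δ_{G₀})/σ_{G₀} < z_α) → 1 as n → ∞, where δ̂_n = (Σ_{i≠j} max{X_i,X_j})/(n(n−1)X̄_n) and z_α is the α-quantile of the standard normal distribution; i.e., the test is consistent. -/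
/-!
With the centred kernel `h(x, y) = max x y - (δ_F / 2) (x + y)`, the numerator of `δ̂_n` is
`U_n + δ_F (n - 1) S_n`, where `U_n = Σ_{i ≠ j} h(X_i, X_j)` and `S_n = Σ_i X_i`, so
`δ̂_n - δ_F = (U_n / (n (n - 1))) / (S_n / n)`. Since `E h(X_i, X_j) = 0`, the products
`h(X_i, X_j) h(X_k, X_l)` have mean zero unless the two pairs share an index; hence
`E U_n² = O(n³)` and `U_n / (n (n - 1)) → 0` in probability by Chebyshev, while `S_n / n → μ_F`
almost surely by the strong law. So `δ̂_n → δ_F < δ_{G₀}` in probability and the statistic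
`√n (δ̂_n - δ_{G₀}) / σ_{G₀}` drifts to `-∞`.
-/

open MeasureTheory ProbabilityTheory Set Filter

/-- The U-statistic estimator `δ̂_n = (Σ_{i≠j} max{X_i,X_j})/(n(n−1)X̄_n)`. -/
noncomputable def deltaHat {Ω : Type*} (X : ℕ → Ω → ℝ) (n : ℕ) (ω : Ω) : ℝ :=
  (∑ i ∈ Finset.range n, ∑ j ∈ Finset.range n, if i ≠ j then max (X i ω) (X j ω) else 0) /
    ((n : ℝ) * ((n : ℝ) - 1) * ((∑ i ∈ Finset.range n, X i ω) / n))

open Topology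

namespace Finset

lemma sum_sum_ite_ne_eq_sum_offDiag {ι M : Type*} [DecidableEq ι] [AddCommMonoid M]
    (s : Finset ι) (f : ι → ι → M) :
    ∑ i ∈ s, ∑ j ∈ s, (if i ≠ j then f i j else 0) = ∑ p ∈ s.offDiag, f p.1 p.2 := by
  rw [← sum_product' (f := fun i j => if i ≠ j then f i j else 0), ← sum_filter]
  congr 1
  ext p
  simp [mem_offDiag, and_assoc]

lemma sum_offDiag_add {ι : Type*} [DecidableEq ι] (s : Finset ι) (x : ι → ℝ) :
    ∑ p ∈ s.offDiag, (x p.1 + x p.2) = 2 * ((#s : ℝ) - 1) * ∑ i ∈ s, x i := by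
  rw [← sum_sum_ite_ne_eq_sum_offDiag s (fun i j => x i + x j)]
  have hrow : ∀ i ∈ s, ∑ j ∈ s, (if i ≠ j then x i + x j else 0)
      = ((#s : ℝ) - 1) * x i + (∑ j ∈ s, x j - x i) := by
    intro i hi
    rw [← sum_filter, filter_ne, sum_add_distrib, sum_const, card_erase_of_mem hi,
      sum_erase_eq_sub hi, nsmul_eq_mul, Nat.cast_pred (card_pos.2 ⟨i, hi⟩)]
  rw [sum_congr rfl hrow, sum_add_distrib, sum_sub_distrib, ← mul_sum, sum_const, nsmul_eq_mul]
  ring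

lemma card_filter_offDiag_shared_le {ι : Type*} [DecidableEq ι] (s : Finset ι) (p : ι × ι) :
    #{q ∈ s.offDiag | p.1 = q.1 ∨ p.1 = q.2 ∨ p.2 = q.1 ∨ p.2 = q.2} ≤ 4 * #s := by
  have hsub : {q ∈ s.offDiag | p.1 = q.1 ∨ p.1 = q.2 ∨ p.2 = q.1 ∨ p.2 = q.2}
      ⊆ {p.1, p.2} ×ˢ s ∪ s ×ˢ {p.1, p.2} := by
    intro q hq
    simp only [mem_filter, mem_offDiag] at hq
    simp only [mem_union, mem_product, mem_insert, mem_singleton]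
    grind
  calc _ ≤ #({p.1, p.2} ×ˢ s ∪ s ×ˢ {p.1, p.2}) := card_le_card hsub
    _ ≤ #({p.1, p.2} : Finset ι) * #s + #s * #({p.1, p.2} : Finset ι) := by
      grw [card_union_le, card_product, card_product]
    _ ≤ 2 * #s + #s * 2 := by grw [card_le_two]
    _ = 4 * #s := by ring

lemma card_offDiag_range (n : ℕ) :
    (#(range n).offDiag : ℝ) = n * (n - 1) := by
  rw [offDiag_card, card_range, Nat.cast_sub (Nat.le_mul_self n)]
  push_cast
  ring

end Finset

noncomputable def maxKernel (δ x y : ℝ) : ℝ := max x y - δ / 2 * (x + y)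

lemma measurable_maxKernel (δ : ℝ) : Measurable (Function.uncurry (maxKernel δ)) := by
  unfold maxKernel
  fun_prop

open Finset in
lemma sum_sum_ite_ne_max_eq {ι : Type*} [DecidableEq ι] (s : Finset ι) (x : ι → ℝ) (δ : ℝ) :
    ∑ i ∈ s, ∑ j ∈ s, (if i ≠ j then max (x i) (x j) else 0)
      = ∑ p ∈ s.offDiag, maxKernel δ (x p.1) (x p.2) + δ * ((#s : ℝ) - 1) * ∑ i ∈ s, x i := by
  have hmax : ∀ p ∈ s.offDiag, max (x p.1) (x p.2)
      = maxKernel δ (x p.1) (x p.2) + δ / 2 * (x p.1 + x p.2) := fun p _ => by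
    rw [maxKernel]; ring
  rw [sum_sum_ite_ne_eq_sum_offDiag, sum_congr rfl hmax, sum_add_distrib, ← mul_sum,
    sum_offDiag_add]
  ring

noncomputable def uStatSum {Ω β : Type*} (h : β → β → ℝ) (X : ℕ → Ω → β) (n : ℕ) (ω : Ω) : ℝ :=
  ∑ p ∈ (Finset.range n).offDiag, h (X p.1 ω) (X p.2 ω)

lemma uStatSum_sq {Ω β : Type*} (h : β → β → ℝ) (X : ℕ → Ω → β) (n : ℕ) (ω : Ω) :
    uStatSum h X n ω ^ 2 = ∑ p ∈ (Finset.range n).offDiag, ∑ q ∈ (Finset.range n).offDiag,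
      h (X p.1 ω) (X p.2 ω) * h (X q.1 ω) (X q.2 ω) := by
  rw [uStatSum, sq, Finset.sum_mul_sum]

lemma deltaHat_eq_add_div {Ω : Type*} (X : ℕ → Ω → ℝ) (δ : ℝ) {n : ℕ} (hn : 2 ≤ n) (ω : Ω)
    (hS : (∑ i ∈ Finset.range n, X i ω) / n ≠ 0) :
    deltaHat X n ω = δ + uStatSum (maxKernel δ) X n ω / (n * (n - 1))
      / ((∑ i ∈ Finset.range n, X i ω) / n) := by
  have hn' : (2 : ℝ) ≤ n := by exact_mod_cast hn
  have hn1 : (n : ℝ) - 1 ≠ 0 := by linarith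
  have hS' : ∑ i ∈ Finset.range n, X i ω ≠ 0 := (div_ne_zero_iff.1 hS).1
  rw [deltaHat, sum_sum_ite_ne_max_eq _ _ δ, Finset.card_range, uStatSum]
  field_simp
  ring

lemma measurable_deltaHat {Ω : Type*} [MeasurableSpace Ω] {X : ℕ → Ω → ℝ}
    (hXm : ∀ i, Measurable (X i)) (n : ℕ) : Measurable (deltaHat X n) := by
  unfold deltaHat
  simp_rw [Finset.sum_sum_ite_ne_eq_sum_offDiag]
  fun_prop

section UStatistic

variable {Ω β : Type*} [MeasurableSpace Ω] [MeasurableSpace β] {μ : Measure Ω}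
  [IsProbabilityMeasure μ] {X : ℕ → Ω → β} {h : β → β → ℝ}

lemma identDistrib_pair (hXm : ∀ i, Measurable (X i))
    (hident : ∀ i, IdentDistrib (X i) (X 0) μ μ) (hindep : iIndepFun X μ) {i j : ℕ} (hij : i ≠ j) :
    IdentDistrib (fun ω => (X i ω, X j ω)) (fun ω => (X 0 ω, X 1 ω)) μ μ := by
  have hmap : ∀ {k l : ℕ}, k ≠ l → Measure.map (fun ω => (X k ω, X l ω)) μ
      = (Measure.map (X 0) μ).prod (Measure.map (X 0) μ) := fun {k l} hkl => by
    rw [(indepFun_iff_map_prod_eq_prod_map_map (hXm k).aemeasurable (hXm l).aemeasurable).1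
      (hindep.indepFun hkl), (hident k).map_eq, (hident l).map_eq]
  exact ⟨((hXm i).prodMk (hXm j)).aemeasurable, ((hXm 0).prodMk (hXm 1)).aemeasurable,
    by rw [hmap hij, hmap zero_ne_one]⟩

lemma identDistrib_kernel_pair (hXm : ∀ i, Measurable (X i))
    (hident : ∀ i, IdentDistrib (X i) (X 0) μ μ) (hindep : iIndepFun X μ)
    (hh : Measurable (Function.uncurry h)) {i j : ℕ} (hij : i ≠ j) :
    IdentDistrib (fun ω => h (X i ω) (X j ω)) (fun ω => h (X 0 ω) (X 1 ω)) μ μ :=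
  (identDistrib_pair hXm hident hindep hij).comp hh

lemma memLp_kernel_pair (hXm : ∀ i, Measurable (X i))
    (hident : ∀ i, IdentDistrib (X i) (X 0) μ μ) (hindep : iIndepFun X μ)
    (hh : Measurable (Function.uncurry h)) (hsq : Integrable (fun ω => h (X 0 ω) (X 1 ω) ^ 2) μ)
    {p : ℕ × ℕ} (hp : p.1 ≠ p.2) : MemLp (fun ω => h (X p.1 ω) (X p.2 ω)) 2 μ :=
  (identDistrib_kernel_pair hXm hident hindep hh hp).memLp_iff.2 <|
    (memLp_two_iff_integrable_sq (hh.comp ((hXm 0).prodMk (hXm 1))).aestronglyMeasurable).2 hsq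

lemma integral_kernel_pair_mul_le (hXm : ∀ i, Measurable (X i))
    (hident : ∀ i, IdentDistrib (X i) (X 0) μ μ) (hindep : iIndepFun X μ)
    (hh : Measurable (Function.uncurry h)) (hsq : Integrable (fun ω => h (X 0 ω) (X 1 ω) ^ 2) μ)
    {p q : ℕ × ℕ} (hp : p.1 ≠ p.2) (hq : q.1 ≠ q.2) :
    ∫ ω, h (X p.1 ω) (X p.2 ω) * h (X q.1 ω) (X q.2 ω) ∂μ ≤ ∫ ω, h (X 0 ω) (X 1 ω) ^ 2 ∂μ := by
  have hLp := memLp_kernel_pair hXm hident hindep hh hsq hp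
  have hLq := memLp_kernel_pair hXm hident hindep hh hsq hq
  have hsq_eq : ∀ {r : ℕ × ℕ}, r.1 ≠ r.2 →
      ∫ ω, h (X r.1 ω) (X r.2 ω) ^ 2 ∂μ = ∫ ω, h (X 0 ω) (X 1 ω) ^ 2 ∂μ := fun hr =>
    ((identDistrib_kernel_pair hXm hident hindep hh hr).comp
      (measurable_id.pow_const 2)).integral_eq
  calc ∫ ω, h (X p.1 ω) (X p.2 ω) * h (X q.1 ω) (X q.2 ω) ∂μ
      ≤ ∫ ω, (h (X p.1 ω) (X p.2 ω) ^ 2 + h (X q.1 ω) (X q.2 ω) ^ 2) / 2 ∂μ :=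
        integral_mono (hLp.integrable_mul hLq)
          ((hLp.integrable_sq.add hLq.integrable_sq).div_const 2)
          fun ω => by nlinarith [sq_nonneg (h (X p.1 ω) (X p.2 ω) - h (X q.1 ω) (X q.2 ω))]
    _ = ∫ ω, h (X 0 ω) (X 1 ω) ^ 2 ∂μ := by
        rw [integral_div, integral_add hLp.integrable_sq hLq.integrable_sq, hsq_eq hp, hsq_eq hq]
        ring

lemma integral_kernel_pair_mul_eq_zero (hXm : ∀ i, Measurable (X i))
    (hident : ∀ i, IdentDistrib (X i) (X 0) μ μ) (hindep : iIndepFun X μ)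
    (hh : Measurable (Function.uncurry h)) (hzero : ∫ ω, h (X 0 ω) (X 1 ω) ∂μ = 0)
    {p q : ℕ × ℕ} (hp : p.1 ≠ p.2)
    (h11 : p.1 ≠ q.1) (h12 : p.1 ≠ q.2) (h21 : p.2 ≠ q.1) (h22 : p.2 ≠ q.2) :
    ∫ ω, h (X p.1 ω) (X p.2 ω) * h (X q.1 ω) (X q.2 ω) ∂μ = 0 := by
  have hindep_pq : IndepFun (fun ω => h (X p.1 ω) (X p.2 ω)) (fun ω => h (X q.1 ω) (X q.2 ω)) μ :=
    (hindep.indepFun_prodMk_prodMk hXm _ _ _ _ h11 h12 h21 h22).comp hh hh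
  rw [hindep_pq.integral_fun_mul_eq_mul_integral
      (hh.comp ((hXm p.1).prodMk (hXm p.2))).aestronglyMeasurable
      (hh.comp ((hXm q.1).prodMk (hXm q.2))).aestronglyMeasurable,
    (identDistrib_kernel_pair hXm hident hindep hh hp).integral_eq, hzero, zero_mul]

lemma integrable_uStatSum_sq (hXm : ∀ i, Measurable (X i))
    (hident : ∀ i, IdentDistrib (X i) (X 0) μ μ) (hindep : iIndepFun X μ)
    (hh : Measurable (Function.uncurry h)) (hsq : Integrable (fun ω => h (X 0 ω) (X 1 ω) ^ 2) μ)
    (n : ℕ) : Integrable (fun ω => uStatSum h X n ω ^ 2) μ := by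
  simp_rw [uStatSum_sq]
  refine integrable_finsetSum _ fun p hp => integrable_finsetSum _ fun q hq => ?_
  exact (memLp_kernel_pair hXm hident hindep hh hsq (Finset.mem_offDiag.1 hp).2.2).integrable_mul
    (memLp_kernel_pair hXm hident hindep hh hsq (Finset.mem_offDiag.1 hq).2.2)

open Finset in
lemma integral_uStatSum_sq_le (hXm : ∀ i, Measurable (X i))
    (hident : ∀ i, IdentDistrib (X i) (X 0) μ μ) (hindep : iIndepFun X μ)
    (hh : Measurable (Function.uncurry h)) (hsq : Integrable (fun ω => h (X 0 ω) (X 1 ω) ^ 2) μ)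
    (hzero : ∫ ω, h (X 0 ω) (X 1 ω) ∂μ = 0) (n : ℕ) :
    ∫ ω, uStatSum h X n ω ^ 2 ∂μ ≤ 4 * n ^ 2 * (n - 1) * ∫ ω, h (X 0 ω) (X 1 ω) ^ 2 ∂μ := by
  set M := ∫ ω, h (X 0 ω) (X 1 ω) ^ 2 ∂μ
  set D := (range n).offDiag
  have hM : 0 ≤ M := integral_nonneg fun ω => sq_nonneg _
  have hint : ∀ p ∈ D, ∀ q ∈ D,
      Integrable (fun ω => h (X p.1 ω) (X p.2 ω) * h (X q.1 ω) (X q.2 ω)) μ := fun p hp q hq =>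
    (memLp_kernel_pair hXm hident hindep hh hsq (mem_offDiag.1 hp).2.2).integrable_mul
      (memLp_kernel_pair hXm hident hindep hh hsq (mem_offDiag.1 hq).2.2)
  -- pairs without a common index are uncorrelated; each pair meets at most `4 n` others
  have hrow : ∀ p ∈ D, ∑ q ∈ D, ∫ ω, h (X p.1 ω) (X p.2 ω) * h (X q.1 ω) (X q.2 ω) ∂μ
      ≤ 4 * n * M := by
    intro p hp
    rw [← sum_filter_of_ne (p := fun q => p.1 = q.1 ∨ p.1 = q.2 ∨ p.2 = q.1 ∨ p.2 = q.2)]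
    · calc _ ≤ #{q ∈ D | p.1 = q.1 ∨ p.1 = q.2 ∨ p.2 = q.1 ∨ p.2 = q.2} • M :=
            sum_le_card_nsmul _ _ _ fun q hq => integral_kernel_pair_mul_le hXm hident hindep hh
              hsq (mem_offDiag.1 hp).2.2 (mem_offDiag.1 (mem_filter.1 hq).1).2.2
        _ ≤ (4 * n : ℕ) • M := by
            gcongr
            simpa using card_filter_offDiag_shared_le (range n) p
        _ = 4 * n * M := by rw [nsmul_eq_mul]; push_cast; ring
    · intro q hq hne
      by_contra! hshared
      exact hne (integral_kernel_pair_mul_eq_zero hXm hident hindep hh hzero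
        (mem_offDiag.1 hp).2.2 hshared.1 hshared.2.1 hshared.2.2.1 hshared.2.2.2)
  calc ∫ ω, uStatSum h X n ω ^ 2 ∂μ
      = ∑ p ∈ D, ∑ q ∈ D, ∫ ω, h (X p.1 ω) (X p.2 ω) * h (X q.1 ω) (X q.2 ω) ∂μ := by
        simp_rw [uStatSum_sq]
        rw [integral_finsetSum _ fun p hp => integrable_finsetSum _ (hint p hp)]
        exact sum_congr rfl fun p hp => integral_finsetSum _ (hint p hp)
    _ ≤ ∑ _p ∈ D, 4 * n * M := sum_le_sum hrow
    _ = 4 * n ^ 2 * (n - 1) * M := by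
        rw [sum_const, nsmul_eq_mul, card_offDiag_range]
        ring

end UStatistic

lemma tendstoInMeasure_zero_of_integral_sq_le {Ω ι : Type*} [MeasurableSpace Ω] {μ : Measure Ω}
    [IsFiniteMeasure μ] {l : Filter ι} {f : ι → Ω → ℝ} {b : ι → ℝ}
    (hf : ∀ i, Integrable (fun ω => f i ω ^ 2) μ) (hfb : ∀ᶠ i in l, ∫ ω, f i ω ^ 2 ∂μ ≤ b i)
    (hb : Tendsto b l (𝓝 0)) : TendstoInMeasure μ f l 0 := by
  rw [tendstoInMeasure_iff_measureReal_dist]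
  intro ε hε
  refine tendsto_of_tendsto_of_tendsto_of_le_of_le' tendsto_const_nhds
    (by simpa using hb.div_const (ε ^ 2)) (Eventually.of_forall fun _ => measureReal_nonneg) ?_
  filter_upwards [hfb] with i hi
  have hsub : {ω | ε ≤ dist (f i ω) ((0 : Ω → ℝ) ω)} ⊆ {ω | ε ^ 2 ≤ f i ω ^ 2} := fun ω hω => by
    simpa [sq_abs] using pow_le_pow_left₀ hε.le (show ε ≤ |f i ω| by simpa using hω) 2
  have hmarkov := mul_meas_ge_le_integral_of_nonneg
    (Eventually.of_forall fun ω => sq_nonneg (f i ω)) (hf i) (ε ^ 2)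
  rw [le_div_iff₀ (by positivity)]
  nlinarith [measureReal_mono hsub (μ := μ)]

lemma tendstoInMeasure_uStatSum_div {Ω β : Type*} [MeasurableSpace Ω] [MeasurableSpace β]
    {μ : Measure Ω} [IsProbabilityMeasure μ] {X : ℕ → Ω → β} {h : β → β → ℝ}
    (hXm : ∀ i, Measurable (X i))
    (hident : ∀ i, IdentDistrib (X i) (X 0) μ μ) (hindep : iIndepFun X μ)
    (hh : Measurable (Function.uncurry h)) (hsq : Integrable (fun ω => h (X 0 ω) (X 1 ω) ^ 2) μ)
    (hzero : ∫ ω, h (X 0 ω) (X 1 ω) ∂μ = 0) :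
    TendstoInMeasure μ (fun n ω => uStatSum h X n ω / (n * (n - 1))) atTop 0 := by
  set M := ∫ ω, h (X 0 ω) (X 1 ω) ^ 2 ∂μ
  refine tendstoInMeasure_zero_of_integral_sq_le (b := fun n : ℕ => 4 * M / ((n : ℝ) - 1))
    (fun n => by simpa only [div_pow] using
      (integrable_uStatSum_sq hXm hident hindep hh hsq n).div_const _) ?_ ?_
  · filter_upwards [eventually_ge_atTop 2] with n hn
    have hn' : (2 : ℝ) ≤ n := by exact_mod_cast hn
    simp_rw [div_pow]
    have hn1 : (0 : ℝ) < n - 1 := by linarith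
    rw [integral_div, div_le_div_iff₀ (by positivity) hn1]
    calc (∫ ω, uStatSum h X n ω ^ 2 ∂μ) * (n - 1)
        ≤ 4 * n ^ 2 * (n - 1) * M * (n - 1) := by
          gcongr
          exact integral_uStatSum_sq_le hXm hident hindep hh hsq hzero n
      _ = 4 * M * (n * (n - 1)) ^ 2 := by ring
  · exact tendsto_const_nhds.div_atTop
      (tendsto_atTop_add_const_right _ (-1) tendsto_natCast_atTop_atTop)

lemma integral_maxKernel_eq_zero {Ω : Type*} [MeasurableSpace Ω] {μ : Measure Ω}
    {X : ℕ → Ω → ℝ} {δ : ℝ} (hX1 : IdentDistrib (X 1) (X 0) μ μ) (hint : Integrable (X 0) μ)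
    (hδ : ∫ ω, max (X 0 ω) (X 1 ω) ∂μ = δ * ∫ ω, X 0 ω ∂μ) :
    ∫ ω, maxKernel δ (X 0 ω) (X 1 ω) ∂μ = 0 := by
  have hint1 : Integrable (X 1) μ := hX1.integrable_iff.2 hint
  have hmax : Integrable (fun ω => max (X 0 ω) (X 1 ω)) μ := hint.sup hint1
  have hsum : Integrable (fun ω => X 0 ω + X 1 ω) μ := hint.add hint1
  unfold maxKernel
  rw [integral_sub hmax (hsum.const_mul _), integral_const_mul,
    integral_add hint hint1, hδ, hX1.integral_eq]
  ring

theorem tendstoInMeasure_deltaHat {Ω : Type*} [MeasurableSpace Ω] {μ : Measure Ω}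
    [IsProbabilityMeasure μ] {X : ℕ → Ω → ℝ} {δ : ℝ} (hXm : ∀ i, Measurable (X i))
    (hident : ∀ i, IdentDistrib (X i) (X 0) μ μ) (hindep : iIndepFun X μ)
    (hint : Integrable (X 0) μ) (hmean : ∫ ω, X 0 ω ∂μ ≠ 0)
    (hδ : ∫ ω, max (X 0 ω) (X 1 ω) ∂μ = δ * ∫ ω, X 0 ω ∂μ)
    (hsq : Integrable (fun ω => maxKernel δ (X 0 ω) (X 1 ω) ^ 2) μ) :
    TendstoInMeasure μ (deltaHat X) atTop (fun _ => δ) := by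
  have hU := tendstoInMeasure_uStatSum_div hXm hident hindep (measurable_maxKernel δ) hsq
    (integral_maxKernel_eq_zero (hident 1) hint hδ)
  have hSLLN := strong_law_ae_real X hint (fun i j hij => hindep.indepFun hij) hident
  -- Subsequence criterion: the U-statistic part converges a.s. along a further subsequence,
  -- and the strong law holds along every subsequence.
  rw [exists_seq_tendstoInMeasure_atTop_iff
    fun n => (measurable_deltaHat hXm n).aestronglyMeasurable]
  intro ns hns
  obtain ⟨ns', hns', hU'⟩ := (hU.comp hns.tendsto_atTop).exists_seq_tendsto_ae
  refine ⟨ns', hns', ?_⟩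
  filter_upwards [hU', hSLLN] with ω hUω hSω
  have hSω' := hSω.comp (hns.comp hns').tendsto_atTop
  have hlim := tendsto_const_nhds (x := δ) |>.add (hUω.div hSω' hmean)
  rw [Pi.zero_apply, zero_div, add_zero] at hlim
  refine hlim.congr' ?_
  filter_upwards [hSω'.eventually_ne hmean,
    (hns.comp hns').tendsto_atTop.eventually_ge_atTop 2] with i hi hi2
  exact (deltaHat_eq_add_div X δ hi2 ω hi).symm

lemma MeasureTheory.TendstoInMeasure.tendsto_measureReal_lt {Ω ι : Type*} [MeasurableSpace Ω]
    {μ : Measure Ω} [IsProbabilityMeasure μ] {l : Filter ι} {f : ι → Ω → ℝ} {c b : ℝ}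
    (hf : TendstoInMeasure μ f l fun _ => c) (hcb : c < b) :
    Tendsto (fun i => μ.real {ω | f i ω < b}) l (𝓝 1) := by
  have hfar := (tendstoInMeasure_iff_measureReal_dist.1 hf) (b - c) (by linarith)
  refine tendsto_of_tendsto_of_tendsto_of_le_of_le
    (by simpa only [sub_zero] using tendsto_const_nhds.sub hfar) tendsto_const_nhds (fun i => ?_) fun i => measureReal_le_one
  have hcompl : {ω | f i ω < b}ᶜ ⊆ {ω | b - c ≤ dist (f i ω) c} := fun ω hω => by
    simp only [mem_compl_iff, mem_ofPred_eq, not_lt, Real.dist_eq] at hω ⊢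
    exact (sub_le_sub_right hω c).trans (le_abs_self _)
  have hcover := measureReal_union_le (μ := μ) {ω | f i ω < b} {ω | f i ω < b}ᶜ
  rw [union_compl_self, probReal_univ] at hcover
  linarith [measureReal_mono hcompl (μ := μ)]

theorem stmt14_general {Ω : Type*} [MeasureSpace Ω] [IsProbabilityMeasure (ℙ : Measure Ω)]
    (X : ℕ → Ω → ℝ) (hXm : ∀ i, Measurable (X i))
    (hiid : ∀ i, Measure.map (X i) ℙ = Measure.map (X 0) ℙ)
    (hindep : iIndepFun X ℙ)
    (hXint : Integrable (X 0) ℙ)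
    (μF : ℝ) (hμF : μF = ∫ ω, X 0 ω) (hμFpos : 0 < μF)
    (δF : ℝ) (hδF : δF = (∫ ω, max (X 0 ω) (X 1 ω)) / μF)
    (hmom2 : Integrable (fun ω =>
      (max (X 0 ω) (X 1 ω) - δF / 2 * (X 0 ω + X 1 ω)) ^ 2) ℙ)
    (δG0 σG0 : ℝ) (hσG0 : 0 < σG0)
    (halt : δF - δG0 < 0)
    (zα : ℝ) :
    Tendsto (fun n : ℕ =>
        (ℙ {ω | Real.sqrt n * (deltaHat X n ω - δG0) / σG0 < zα}).toReal) atTop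
      (nhds 1) := by
  have hident : ∀ i, IdentDistrib (X i) (X 0) ℙ ℙ := fun i =>
    ⟨(hXm i).aemeasurable, (hXm 0).aemeasurable, hiid i⟩
  have hδ : ∫ ω, max (X 0 ω) (X 1 ω) = δF * ∫ ω, X 0 ω := by
    rw [hδF, ← hμF]
    field_simp
  have hconv := tendstoInMeasure_deltaHat hXm hident hindep hXint (hμF ▸ hμFpos.ne') hδ hmom2
  set ε := (δG0 - δF) / 2 with hε_def
  have hε : 0 < ε := by linarith
  have hsqrt : ∀ᶠ n : ℕ in atTop, -(σG0 * zα) < √n * ε :=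
    ((Real.tendsto_sqrt_atTop.comp tendsto_natCast_atTop_atTop).atTop_mul_const hε
      ).eventually_gt_atTop _
  refine tendsto_of_tendsto_of_tendsto_of_le_of_le'
    (hconv.tendsto_measureReal_lt (b := δF + ε) (by linarith)) tendsto_const_nhds ?_
    (Eventually.of_forall fun n => measureReal_le_one)
  filter_upwards [hsqrt] with n hn
  refine measureReal_mono fun ω (hω : deltaHat X n ω < δF + ε) => ?_
  have hgap : deltaHat X n ω - δG0 ≤ -ε := by linarith
  rw [mem_ofPred_eq, div_lt_iff₀ hσG0]
  linarith [mul_le_mul_of_nonneg_left hgap (Real.sqrt_nonneg n)]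

/-- Consistency of the test: if `δ_F − δ_{G₀} < 0`, then for every `α ∈ (0,1)`
the rejection probability `P(√n(δ̂_n − δ_{G₀})/σ_{G₀} < z_α)` tends to `1`,
where `z_α` is the `α`-quantile of the standard normal distribution. -/
theorem stmt14 {Ω : Type*} [MeasureSpace Ω] [IsProbabilityMeasure (ℙ : Measure Ω)]
    (X : ℕ → Ω → ℝ) (hXm : ∀ i, Measurable (X i))
    (hXpos : ∀ i ω, 0 ≤ X i ω)
    (hiid : ∀ i, Measure.map (X i) ℙ = Measure.map (X 0) ℙ)
    (hindep : iIndepFun X ℙ)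
    (hXint : Integrable (X 0) ℙ)
    (μF : ℝ) (hμF : μF = ∫ ω, X 0 ω) (hμFpos : 0 < μF)
    (δF : ℝ) (hδF : δF = (∫ ω, max (X 0 ω) (X 1 ω)) / μF)
    (hmom2 : Integrable (fun ω =>
      (max (X 0 ω) (X 1 ω) - δF / 2 * (X 0 ω + X 1 ω)) ^ 2) ℙ)
    (δG0 σG0 : ℝ) (hσG0 : 0 < σG0)
    (halt : δF - δG0 < 0)
    (α : ℝ) (hα : α ∈ Set.Ioo (0 : ℝ) 1)
    (zα : ℝ) (hzα : (gaussianReal 0 1 (Set.Iic zα)).toReal = α) :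
    Tendsto (fun n : ℕ =>
        (ℙ {ω | Real.sqrt n * (deltaHat X n ω - δG0) / σG0 < zα}).toReal) atTop
      (nhds 1) :=
  stmt14_general X hXm hiid hindep hXint μF hμF hμFpos δF hδF hmom2 δG0 σG0 hσG0 halt zα
end

section
/- For the Weibull family with δ_θ = 2 − 2^{−1/θ} (θ ≥ 1), the derivative of θ ↦ δ_θ at θ = 1 equals −(log 2)/2; consequently, the Pitman asymptotic efficiency of the test based on δ̂ against Weibull alternatives, PAE = (dδ_θ/dθ|_{θ=1})² / σ²_{E_λ} with σ²_{E_λ} = 1/12, equals 12·((log 2)/2)² = 3(log 2)² ≈ 1.4414. -/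
open Real

theorem hasDerivAt_rpow_neg_one_div {a θ : ℝ} (ha : 0 < a) (hθ : θ ≠ 0) :
    HasDerivAt (fun t : ℝ => a ^ (-1 / t)) (a ^ (-1 / θ) * log a / θ ^ 2) θ := by
  have hexp : HasDerivAt (fun t : ℝ => -1 / t) (1 / θ ^ 2) θ := by
    simpa [neg_div, div_eq_mul_inv] using (hasDerivAt_inv hθ).fun_neg
  exact ((hasStrictDerivAt_const_rpow ha (-1 / θ)).hasDerivAt.comp θ hexp).congr_deriv
    (by ring)

theorem hasDerivAt_weibull_max_mean_ratio_at_one :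
    HasDerivAt (fun θ : ℝ => 2 - (2 : ℝ) ^ (-1 / θ)) (-(log 2) / 2) 1 := by
  refine ((hasDerivAt_const (1 : ℝ) (2 : ℝ)).fun_sub
    (hasDerivAt_rpow_neg_one_div two_pos one_ne_zero)).congr_deriv ?_
  norm_num [rpow_neg_one]
  ring

/-- For the Weibull family `δ_θ = 2 − 2^{−1/θ}` (`θ ≥ 1`), the derivative at `θ = 1`
is `−(log 2)/2`; hence the Pitman asymptotic efficiency
`PAE = (dδ_θ/dθ|_{θ=1})²/σ²_{E_λ}` with `σ²_{E_λ} = 1/12` equals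
`12·((log 2)/2)² = 3(log 2)²`. -/
theorem stmt16 :
    deriv (fun θ : ℝ => 2 - (2 : ℝ) ^ (-1 / θ)) 1 = -(Real.log 2) / 2 ∧
      (deriv (fun θ : ℝ => 2 - (2 : ℝ) ^ (-1 / θ)) 1) ^ 2 / (1 / 12)
        = 12 * ((Real.log 2) / 2) ^ 2 ∧
      (12 : ℝ) * ((Real.log 2) / 2) ^ 2 = 3 * (Real.log 2) ^ 2 := by
  have hderiv := hasDerivAt_weibull_max_mean_ratio_at_one.deriv
  refine ⟨hderiv, ?_, by ring⟩
  rw [hderiv]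
  ring
end
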